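/- arXiv:0706.1483 — 2 statements merged into one kernel-verified Lean document; each statement's English description precedes it below -/
import Mathlib

section
/- Let C = (θ_j, l_j)_{j∈ℤ/pℤ} be a simple cycle of length p for (τ_d)_{d∈D}. Let n ∈ ℕ, let ω_0, …, ω_{np−1} ∈ D, let q ≥ 1 and m_0, …, m_{q−1} ∈ D, and let ω ∈ D^ℕ be the word ω_0…ω_{np−1} followed by the infinite repetition of m_0…m_{q−1}. Let η₀ ∈ ℝ^d be the unique fixed point of τ_{m_{q−1}}∘⋯∘τ_{m_0} (which exists since A is expansive), and assume η₀ − θ_{j'} ∈ −ℤ^d for some (necessarily unique, by simplicity) j' ∈ ℤ/pℤ, i.e., η₀ ∈ θ_{j'} − ℤ^d. Then there is a unique pair (k, j) ∈ ℤ^d × ℤ/pℤ such that for all x ∈ ℝ^d and all n' ∈ ℕ: τ_{ω_{n'−1}}∘⋯∘τ_{ω_0}(x) − (A^T)^{−n'}(x + k − θ_j) − θ_{j+n'} ∈ ℤ^d. Moreover j = j' and k = ∑_{i=0}^{np−1} (A^T)^i ω_i + θ_{j'} − (A^T)^{np} η₀. -/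
open Matrix MeasureTheory Filter Topology

noncomputable section

/-- The integer lattice ℤ^d inside ℝ^d. -/
def intLattice (d : ℕ) : AddSubgroup (Fin d → ℝ) where
  carrier := {x | ∀ i, ∃ k : ℤ, x i = (k : ℝ)}
  zero_mem' := fun i => ⟨0, by simp⟩
  add_mem' := by
    intro x y hx hy i
    obtain ⟨a, ha⟩ := hx i
    obtain ⟨b, hb⟩ := hy i
    exact ⟨a + b, by simp [ha, hb]⟩
  neg_mem' := by
    intro x hx i
    obtain ⟨a, ha⟩ := hx i
    exact ⟨-a, by simp [ha]⟩

/-- The torus ℝ^d / ℤ^d. -/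
abbrev Torus (d : ℕ) := (Fin d → ℝ) ⧸ intLattice d

/-- The quotient homomorphism π : ℝ^d → 𝕋^d. -/
def torusMk (d : ℕ) : (Fin d → ℝ) →+ Torus d := QuotientAddGroup.mk' (intLattice d)

/-- A square integer matrix is expansive if all of its complex eigenvalues `μ`
satisfy `|μ| > 1`. -/
def Expansive {d : ℕ} (A : Matrix (Fin d) (Fin d) ℤ) : Prop :=
  ∀ μ : ℂ, (Matrix.charpoly (A.map (Int.cast : ℤ → ℂ))).IsRoot μ → 1 < ‖μ‖

/-- The real matrix associated to an integer matrix. -/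
def toR {d : ℕ} (A : Matrix (Fin d) (Fin d) ℤ) : Matrix (Fin d) (Fin d) ℝ :=
  A.map (Int.cast : ℤ → ℝ)

lemma latticeMap_aux {d : ℕ} (M : Matrix (Fin d) (Fin d) ℤ) :
    intLattice d ≤ (intLattice d).comap (toR M).mulVecLin.toAddMonoidHom := by
  intro x hx
  choose k hk using hx
  intro i
  refine ⟨∑ j, M i j * k j, ?_⟩
  have : (toR M).mulVecLin.toAddMonoidHom x i = ∑ j, (M i j : ℝ) * (k j : ℝ) := by
    simp [toR, Matrix.mulVec, dotProduct, hk, Matrix.map_apply]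
  rw [this]
  push_cast
  ring

/-- The endomorphism of the torus induced by an integer matrix. -/
def torusHom {d : ℕ} (M : Matrix (Fin d) (Fin d) ℤ) : Torus d →+ Torus d :=
  QuotientAddGroup.map _ _ (toR M).mulVecLin.toAddMonoidHom (latticeMap_aux M)

/-- The solenoid `S_A`, as an additive subgroup of `(𝕋^d)^ℕ`. -/
def solenoid {d : ℕ} (A : Matrix (Fin d) (Fin d) ℤ) : AddSubgroup (ℕ → Torus d) where
  carrier := {z | ∀ n, torusHom Aᵀ (z (n + 1)) = z n}
  zero_mem' := by intro n; simp
  add_mem' := by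
    intro a b ha hb n
    simp only [Pi.add_apply, map_add, ha n, hb n]
  neg_mem' := by
    intro a ha n
    simp only [Pi.neg_apply, map_neg, ha n]

/-- The shift automorphism σ_A of the solenoid (written on the ambient space). -/
def sigmaA {d : ℕ} (A : Matrix (Fin d) (Fin d) ℤ) (z : ℕ → Torus d) : ℕ → Torus d
  | 0 => torusHom Aᵀ (z 0)
  | n + 1 => z n

/-- The embedding î : ℝ^d → S_A, î(x) = (π((Aᵀ)^{-n} x))ₙ. -/
def ihat {d : ℕ} (A : Matrix (Fin d) (Fin d) ℤ) (x : Fin d → ℝ) : ℕ → Torus d :=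
  fun n => torusMk d ((((toR A)ᵀ)⁻¹ ^ n).mulVec x)

end

/-- D is a complete set of representatives of ℤ^d / Aᵀℤ^d. -/
def CompleteDigits {d : ℕ} (A : Matrix (Fin d) (Fin d) ℤ) (D : Set (Fin d → ℤ)) : Prop :=
  ∀ x : Fin d → ℤ, ∃! v : Fin d → ℤ, v ∈ D ∧ ∃ y : Fin d → ℤ, x - v = Aᵀ.mulVec y

/-- The affine map τ_v(x) = (Aᵀ)⁻¹(x + v) for a digit v ∈ ℤ^d. -/
noncomputable def tauD {d : ℕ} (A : Matrix (Fin d) (Fin d) ℤ) (v : Fin d → ℤ)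
    (x : Fin d → ℝ) : Fin d → ℝ :=
  (((toR A)ᵀ)⁻¹).mulVec (x + fun i => (v i : ℝ))

/-- The attractor X(Aᵀ, D) = { ∑_{j≥1} (Aᵀ)^{−j} d_j : d_j ∈ D }. -/
def attractor (d : ℕ) (A : Matrix (Fin d) (Fin d) ℤ) (D : Set (Fin d → ℤ)) :
    Set (Fin d → ℝ) :=
  {x | ∃ dig : ℕ → Fin d → ℤ, (∀ j, dig j ∈ D) ∧
    HasSum (fun j : ℕ => ((((toR A)ᵀ)⁻¹) ^ (j + 1)).mulVec fun i => (dig j i : ℝ)) x}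

/-- Iterated maps: tauWord ω n = τ_{ω_{n−1}} ∘ ⋯ ∘ τ_{ω_0} (identity for n = 0). -/
noncomputable def tauWord {d : ℕ} (A : Matrix (Fin d) (Fin d) ℤ)
    (ω : ℕ → Fin d → ℤ) : ℕ → (Fin d → ℝ) → Fin d → ℝ
  | 0 => fun x => x
  | n + 1 => fun x => tauD A (ω n) (tauWord A ω n x)

/-- The decoding map 𝔡 : ℝ^d × Ω → S_A, 𝔡(x,ω)_n = π(τ_{ω_{n−1}}⋯τ_{ω_0} x). -/
noncomputable def codeMap {d : ℕ} (A : Matrix (Fin d) (Fin d) ℤ)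
    (x : Fin d → ℝ) (ω : ℕ → Fin d → ℤ) : ℕ → Torus d :=
  fun n => torusMk d (tauWord A ω n x)

/-!
Write `B = (Aᵀ)⁻¹`. Since `A` is expansive, `Bʳ v → 0` for every `v` (Gelfand's formula), so an
orbit `Bʳ w` that stays in a `p`-periodic family of translates of `ℤ^d` forces `w = 0`; comparing
two decodings at `x = 0` this gives uniqueness of `k - θ_j`, hence of `j` by simplicity of the
cycle, hence of `k`.

For existence, `k` is chosen so that the `ω`-orbit `z_r` of `z = θ_{j'} - k` reaches `η` after the
preperiod `np`. From then on the orbit is `pq`-periodic, so `z_r - θ_{j'+r} ∈ ℤ^d` for arbitrarily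
large `r`; since `Aᵀ (z_{r+1} - θ_{j'+r+1}) = z_r - θ_{j'+r} + ω_r - l_{j'+r}`, integrality
propagates down to every `r`. The orbit of any other `x` differs from that of `z` by `Bʳ (x - z)`.
-/

theorem tendsto_norm_pow_atTop_nhds_zero_of_spectralRadius_lt_one {𝔸 : Type*} [NormedRing 𝔸]
    [NormedAlgebra ℂ 𝔸] [CompleteSpace 𝔸] {a : 𝔸} (ha : spectralRadius ℂ a < 1) :
    Tendsto (fun n : ℕ => ‖a ^ n‖) atTop (𝓝 0) := by
  obtain ⟨c, hac, hc1⟩ := ENNReal.lt_iff_exists_nnreal_btwn.mp ha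
  have hroot := spectrum.pow_nnnorm_pow_one_div_tendsto_nhds_spectralRadius a
  have hbound : ∀ᶠ n : ℕ in atTop, ‖a ^ n‖₊ ≤ c ^ n := by
    filter_upwards [hroot.eventually_lt_const hac, eventually_gt_atTop 0] with n hn hn0
    rw [one_div, ENNReal.rpow_inv_lt_iff (by positivity), ENNReal.rpow_natCast] at hn
    exact_mod_cast hn.le
  have hc : Tendsto (fun n : ℕ => (c : ℝ) ^ n) atTop (𝓝 0) :=
    tendsto_pow_atTop_nhds_zero_of_lt_one c.2 (by exact_mod_cast hc1)
  refine squeeze_zero' (.of_forall fun n => norm_nonneg _) ?_ hc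
  filter_upwards [hbound] with n hn
  exact_mod_cast hn

theorem spectralRadius_lt_one_of_forall_nnnorm_lt_one {𝔸 : Type*} [NormedRing 𝔸]
    [NormedAlgebra ℂ 𝔸] [CompleteSpace 𝔸] {a : 𝔸} (ha : ∀ z ∈ spectrum ℂ a, ‖z‖₊ < 1) :
    spectralRadius ℂ a < 1 := by
  rcases (spectrum ℂ a).eq_empty_or_nonempty with h | h
  · simp [spectralRadius, h]
  · exact_mod_cast spectrum.spectralRadius_lt_of_forall_lt_of_nonempty h ha

theorem RingHom.mapMatrix_nonsing_inv {n K L : Type*} [Fintype n] [DecidableEq n] [Field K]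
    [Field L] (f : K →+* L) (M : Matrix n n K) : f.mapMatrix M⁻¹ = (f.mapMatrix M)⁻¹ := by
  rw [Matrix.inv_def, Matrix.inv_def, Ring.inverse_eq_inv', Ring.inverse_eq_inv',
    ← RingHom.map_det, ← RingHom.map_adjugate, ← map_inv₀ f]
  ext
  simp

section Lattice

variable {d : ℕ}

theorem intCast_mem_intLattice (v : Fin d → ℤ) : (fun i => (v i : ℝ)) ∈ intLattice d :=
  fun i => ⟨v i, rfl⟩

theorem toR_transpose_mulVec_mem_intLattice (A : Matrix (Fin d) (Fin d) ℤ) {x : Fin d → ℝ}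
    (hx : x ∈ intLattice d) : (toR A)ᵀ *ᵥ x ∈ intLattice d :=
  latticeMap_aux Aᵀ hx

theorem eq_zero_of_mem_intLattice_of_norm_lt_one {x : Fin d → ℝ} (hx : x ∈ intLattice d)
    (h : ‖x‖ < 1) : x = 0 := by
  funext i
  obtain ⟨k, hk⟩ := hx i
  have hk1 : |(k : ℝ)| < 1 := by
    rw [← hk, ← Real.norm_eq_abs]
    exact (norm_le_pi_norm x i).trans_lt h
  have hk0 : k = 0 := Int.abs_lt_one_iff.mp (by exact_mod_cast hk1)
  rw [hk, hk0, Int.cast_zero, Pi.zero_apply]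

end Lattice

namespace Expansive

variable {d : ℕ} {A : Matrix (Fin d) (Fin d) ℤ}

theorem isUnit_map_complex (hA : Expansive A) : IsUnit (A.map (Int.cast : ℤ → ℂ)) := by
  by_contra h
  have := hA 0 (Matrix.mem_spectrum_iff_isRoot_charpoly.mp ((spectrum.zero_mem_iff ℂ).mpr h))
  norm_num at this

theorem isUnit_det_toR (hA : Expansive A) : IsUnit (toR A).det := by
  have hC : (A.det : ℂ) ≠ 0 := by
    rw [Int.cast_det]
    exact ((Matrix.isUnit_iff_isUnit_det _).mp hA.isUnit_map_complex).ne_zero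
  rw [toR, ← Int.cast_det, isUnit_iff_ne_zero]
  exact_mod_cast hC

theorem isUnit_toR_transpose (hA : Expansive A) : IsUnit (toR A)ᵀ :=
  (Matrix.isUnit_transpose _).mpr ((Matrix.isUnit_iff_isUnit_det _).mpr hA.isUnit_det_toR)

theorem norm_lt_one_of_mem_spectrum (hA : Expansive A) {z : ℂ}
    (hz : z ∈ spectrum ℂ ((A.map (Int.cast : ℤ → ℂ))ᵀ)⁻¹) : ‖z‖ < 1 := by
  have hu : IsUnit (A.map (Int.cast : ℤ → ℂ))ᵀ :=
    (Matrix.isUnit_transpose _).mpr hA.isUnit_map_complex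
  rw [← hu.unit_spec, ← Matrix.coe_units_inv, ← spectrum.map_inv, Set.mem_inv, hu.unit_spec,
    Matrix.mem_spectrum_iff_isRoot_charpoly, Matrix.charpoly_transpose] at hz
  have h := hA _ hz
  rw [norm_inv, one_lt_inv_iff₀] at h
  exact h.2

section LinftyOpNorm

attribute [local instance] Matrix.linftyOpNormedAddCommGroup Matrix.linftyOpNormedRing
  Matrix.linftyOpNormedAlgebra

theorem _root_.Matrix.linfty_opNorm_map_ofReal {m n : Type*} [Fintype m] [Fintype n]
    (M : Matrix m n ℝ) : ‖M.map ((↑) : ℝ → ℂ)‖ = ‖M‖ := by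
  simp [Matrix.linfty_opNorm_def]

theorem tendsto_inv_pow_mulVec (hA : Expansive A) (v : Fin d → ℝ) :
    Tendsto (fun n : ℕ => (((toR A)ᵀ)⁻¹ ^ n) *ᵥ v) atTop (𝓝 0) := by
  set N := ((A.map (Int.cast : ℤ → ℂ))ᵀ)⁻¹
  have hmap : Complex.ofRealHom.mapMatrix ((toR A)ᵀ)⁻¹ = N := by
    rw [RingHom.mapMatrix_nonsing_inv]
    rfl
  have hnorm : ∀ n : ℕ, ‖((toR A)ᵀ)⁻¹ ^ n‖ = ‖N ^ n‖ := fun n => by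
    rw [← hmap, ← map_pow, RingHom.mapMatrix_apply]
    exact (Matrix.linfty_opNorm_map_ofReal _).symm
  have hN : Tendsto (fun n : ℕ => ‖N ^ n‖) atTop (𝓝 0) :=
    tendsto_norm_pow_atTop_nhds_zero_of_spectralRadius_lt_one
      (spectralRadius_lt_one_of_forall_nnnorm_lt_one fun z hz =>
        by exact_mod_cast hA.norm_lt_one_of_mem_spectrum hz)
  refine squeeze_zero_norm (fun n => Matrix.linfty_opNorm_mulVec _ _) ?_
  simpa only [hnorm, zero_mul] using hN.mul_const ‖v‖

end LinftyOpNorm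

theorem eq_zero_of_forall_inv_pow_mulVec_mem (hA : Expansive A) {v : Fin d → ℝ}
    (hv : ∀ r : ℕ, (((toR A)ᵀ)⁻¹ ^ r) *ᵥ v ∈ intLattice d) : v = 0 := by
  obtain ⟨r, hr⟩ :=
    ((hA.tendsto_inv_pow_mulVec v).eventually (Metric.ball_mem_nhds 0 one_pos)).exists
  have hunit : IsUnit (((toR A)ᵀ)⁻¹ ^ r) :=
    (Matrix.isUnit_nonsing_inv_iff.mpr hA.isUnit_toR_transpose).pow r
  apply Matrix.mulVec_injective_iff_isUnit.mpr hunit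
  rw [Matrix.mulVec_zero]
  exact eq_zero_of_mem_intLattice_of_norm_lt_one (hv r) (by simpa using hr)

theorem eq_zero_of_inv_pow_mulVec_eq_self (hA : Expansive A) {p : ℕ} (hp : 0 < p)
    {w : Fin d → ℝ} (hw : (((toR A)ᵀ)⁻¹ ^ p) *ᵥ w = w) : w = 0 := by
  have hconst : ∀ s : ℕ, (((toR A)ᵀ)⁻¹ ^ (p * s)) *ᵥ w = w := by
    intro s
    induction s with
    | zero => simp
    | succ s ih => rw [Nat.mul_succ, pow_add, ← Matrix.mulVec_mulVec, hw, ih]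
  have hlim := (hA.tendsto_inv_pow_mulVec w).comp
    (tendsto_atTop_mono (fun s => Nat.le_mul_of_pos_left s hp) tendsto_id)
  simp only [Function.comp_def, hconst] at hlim
  exact tendsto_nhds_unique tendsto_const_nhds hlim

theorem eq_zero_of_forall_inv_pow_mulVec_add_mem (hA : Expansive A) {p : ℕ} (hp : 0 < p)
    {w : Fin d → ℝ} {c : ℕ → Fin d → ℝ} (hc : ∀ r, c (r + p) = c r)
    (h : ∀ r, (((toR A)ᵀ)⁻¹ ^ r) *ᵥ w + c r ∈ intLattice d) : w = 0 := by
  refine hA.eq_zero_of_inv_pow_mulVec_eq_self hp (sub_eq_zero.mp ?_).symm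
  refine hA.eq_zero_of_forall_inv_pow_mulVec_mem fun r => ?_
  convert sub_mem (h r) (h (r + p)) using 1
  rw [hc, Matrix.mulVec_sub, Matrix.mulVec_mulVec, ← pow_add]
  abel

end Expansive

section TauWord

variable {d : ℕ} (A : Matrix (Fin d) (Fin d) ℤ)

theorem tauWord_sub_tauWord (ω : ℕ → Fin d → ℤ) (r : ℕ) (x y : Fin d → ℝ) :
    tauWord A ω r x - tauWord A ω r y = (((toR A)ᵀ)⁻¹ ^ r) *ᵥ (x - y) := by
  induction r with
  | zero => simp [tauWord]
  | succ r ih =>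
    simp only [tauWord, tauD]
    rw [← Matrix.mulVec_sub, add_sub_add_right_eq_sub, ih, Matrix.mulVec_mulVec, ← pow_succ']

theorem tauWord_congr {ω₁ ω₂ : ℕ → Fin d → ℤ} {r : ℕ} (h : ∀ i < r, ω₁ i = ω₂ i) :
    tauWord A ω₁ r = tauWord A ω₂ r := by
  induction r with
  | zero => rfl
  | succ r ih =>
    funext x
    simp only [tauWord, h r r.lt_succ_self, ih fun i hi => h i (hi.trans r.lt_succ_self)]

theorem tauWord_add (ω : ℕ → Fin d → ℤ) (a b : ℕ) (x : Fin d → ℝ) :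
    tauWord A ω (a + b) x = tauWord A (fun i => ω (a + i)) b (tauWord A ω a x) := by
  induction b with
  | zero => rfl
  | succ b ih => exact congrArg (tauD A (ω (a + b))) ih

theorem tauWord_mod_mul_eq_self {m : ℕ → Fin d → ℤ} {q : ℕ} {η : Fin d → ℝ}
    (hη : tauWord A m q η = η) (s : ℕ) : tauWord A (fun i => m (i % q)) (q * s) η = η := by
  induction s with
  | zero => rfl
  | succ s ih =>
    rw [Nat.mul_succ, tauWord_add, ih, tauWord_congr A fun i hi => ?_, hη]
    simp [Nat.mod_eq_of_lt hi]

variable {A}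

theorem toR_transpose_mulVec_tauD (hA : IsUnit (toR A).det) (v : Fin d → ℤ) (x : Fin d → ℝ) :
    (toR A)ᵀ *ᵥ tauD A v x = x + fun i => (v i : ℝ) := by
  rw [tauD, Matrix.mulVec_mulVec, Matrix.mul_nonsing_inv _ (by rwa [Matrix.det_transpose]),
    Matrix.one_mulVec]

theorem toR_transpose_pow_mulVec_tauWord (hA : IsUnit (toR A).det) (ω : ℕ → Fin d → ℤ)
    (r : ℕ) (x : Fin d → ℝ) :
    ((toR A)ᵀ ^ r) *ᵥ tauWord A ω r x
      = x + ∑ i ∈ Finset.range r, ((toR A)ᵀ ^ i) *ᵥ fun i' => (ω i i' : ℝ) := by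
  induction r with
  | zero => simp [tauWord]
  | succ r ih =>
    rw [tauWord, pow_succ, ← Matrix.mulVec_mulVec, toR_transpose_mulVec_tauD hA,
      Matrix.mulVec_add, ih, Finset.sum_range_succ, add_assoc]

end TauWord

section Cycle

variable {d p : ℕ} {A : Matrix (Fin d) (Fin d) ℤ} {θ : ZMod p → Fin d → ℝ}

theorem tauWord_sub_cycle_mem_of_succ {l : ZMod p → Fin d → ℤ} (hA : IsUnit (toR A).det)
    (hcyc : ∀ j : ZMod p, (toR A)ᵀ.mulVec (θ (j + 1)) = θ j + fun i => (l j i : ℝ))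
    {ω : ℕ → Fin d → ℤ} {z : Fin d → ℝ} {j : ZMod p} {r : ℕ}
    (h : tauWord A ω (r + 1) z - θ (j + (r + 1 : ℕ)) ∈ intLattice d) :
    tauWord A ω r z - θ (j + r) ∈ intLattice d := by
  have hT := toR_transpose_mulVec_mem_intLattice A h
  rw [Matrix.mulVec_sub, tauWord, toR_transpose_mulVec_tauD hA, Nat.cast_succ, ← add_assoc,
    hcyc] at hT
  convert add_mem (sub_mem hT (intCast_mem_intLattice (ω r)))
    (intCast_mem_intLattice (l (j + r))) using 1
  abel

theorem forall_tauWord_sub_cycle_mem {l : ZMod p → Fin d → ℤ} (hA : IsUnit (toR A).det)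
    (hcyc : ∀ j : ZMod p, (toR A)ᵀ.mulVec (θ (j + 1)) = θ j + fun i => (l j i : ℝ))
    {ω : ℕ → Fin d → ℤ} {z : Fin d → ℝ} {j : ZMod p}
    (h : ∀ N, ∃ s ≥ N, tauWord A ω s z - θ (j + s) ∈ intLattice d) (r : ℕ) :
    tauWord A ω r z - θ (j + r) ∈ intLattice d := by
  obtain ⟨s, hrs, hs⟩ := h r
  obtain ⟨t, rfl⟩ := Nat.exists_eq_add_of_le hrs
  clear hrs
  induction t with
  | zero => exact hs
  | succ t ih => exact ih (tauWord_sub_cycle_mem_of_succ hA hcyc hs)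

/-- In the solenoid this says `𝔡(x, ω) = î(x + k - θ_j) + (π θ_{j+n})ₙ`. -/
def IsCycleDecoding (A : Matrix (Fin d) (Fin d) ℤ) (θ : ZMod p → Fin d → ℝ)
    (ω : ℕ → Fin d → ℤ) (k : Fin d → ℤ) (j : ZMod p) : Prop :=
  ∀ (x : Fin d → ℝ) (n' : ℕ),
    (tauWord A ω n' x -
      ((((toR A)ᵀ)⁻¹) ^ n').mulVec (x + (fun i => (k i : ℝ)) - θ j) -
      θ (j + (n' : ZMod p))) ∈ intLattice d

theorem IsCycleDecoding.unique (hA : Expansive A) (hp : 0 < p)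
    (hsimple : ∀ j j' : ZMod p, j ≠ j' → (θ j - θ j') ∉ intLattice d)
    {ω : ℕ → Fin d → ℤ} {k₁ k₂ : Fin d → ℤ} {j₁ j₂ : ZMod p}
    (h₁ : IsCycleDecoding A θ ω k₁ j₁) (h₂ : IsCycleDecoding A θ ω k₂ j₂) :
    k₂ = k₁ ∧ j₂ = j₁ := by
  set w := ((fun i => (k₂ i : ℝ)) - θ j₂) - ((fun i => (k₁ i : ℝ)) - θ j₁)
  have hw : ∀ r : ℕ, (((toR A)ᵀ)⁻¹ ^ r) *ᵥ w + (θ (j₂ + r) - θ (j₁ + r)) ∈ intLattice d := by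
    intro r
    convert sub_mem (h₁ 0 r) (h₂ 0 r) using 1
    simp only [w, zero_add, Matrix.mulVec_sub]
    abel
  have hw0 : w = 0 := hA.eq_zero_of_forall_inv_pow_mulVec_add_mem hp
    (fun r => by simp) hw
  have hj : j₂ = j₁ := by
    by_contra hne
    exact hsimple j₂ j₁ hne (by simpa [hw0] using hw 0)
  subst hj
  refine ⟨funext fun i => ?_, rfl⟩
  have hi := congrFun hw0 i
  simp only [w, sub_sub_sub_cancel_right, Pi.sub_apply, Pi.zero_apply, sub_eq_zero] at hi
  exact_mod_cast hi

end Cycle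

theorem statement18_general (d : ℕ) (A : Matrix (Fin d) (Fin d) ℤ)
    (hA : Expansive A)
    (p : ℕ) (hp : 0 < p) (θ : ZMod p → Fin d → ℝ) (l : ZMod p → Fin d → ℤ)
    (hcyc : ∀ j : ZMod p,
      (toR A)ᵀ.mulVec (θ (j + 1)) = θ j + fun i => (l j i : ℝ))
    (hsimple : ∀ j j' : ZMod p, j ≠ j' → (θ j - θ j') ∉ intLattice d)
    (n q : ℕ) (hq : 1 ≤ q)
    (ω0 : ℕ → Fin d → ℤ)
    (m : ℕ → Fin d → ℤ)
    (ω : ℕ → Fin d → ℤ)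
    (hω : ∀ i, ω i = if i < n * p then ω0 i else m ((i - n * p) % q))
    (η : Fin d → ℝ) (hη : tauWord A m q η = η)
    (j' : ZMod p) (hj' : (θ j' - η) ∈ intLattice d) :
    ∃ (k : Fin d → ℤ) (j : ZMod p),
      (∀ (x : Fin d → ℝ) (n' : ℕ),
        (tauWord A ω n' x -
          ((((toR A)ᵀ)⁻¹) ^ n').mulVec (x + (fun i => (k i : ℝ)) - θ j) -
          θ (j + (n' : ZMod p))) ∈ intLattice d) ∧
      (∀ (k₂ : Fin d → ℤ) (j₂ : ZMod p),
        (∀ (x : Fin d → ℝ) (n' : ℕ),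
          (tauWord A ω n' x -
            ((((toR A)ᵀ)⁻¹) ^ n').mulVec (x + (fun i => (k₂ i : ℝ)) - θ j₂) -
            θ (j₂ + (n' : ZMod p))) ∈ intLattice d) → k₂ = k ∧ j₂ = j) ∧
      j = j' ∧
      (fun i => (k i : ℝ)) =
        (∑ i ∈ Finset.range (n * p),
          ((toR A)ᵀ ^ i).mulVec fun i' => (ω0 i i' : ℝ)) + θ j' -
          ((toR A)ᵀ ^ (n * p)).mulVec η := by
  have hdet := hA.isUnit_det_toR
  set K : Fin d → ℝ := (∑ i ∈ Finset.range (n * p),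
    ((toR A)ᵀ ^ i).mulVec fun i' => (ω0 i i' : ℝ)) + θ j' - ((toR A)ᵀ ^ (n * p)).mulVec η with hK
  have hstart : tauWord A ω (n * p) (θ j' - K) = η := by
    apply Matrix.mulVec_injective_iff_isUnit.mpr (hA.isUnit_toR_transpose.pow (n * p))
    rw [toR_transpose_pow_mulVec_tauWord hdet,
      Finset.sum_congr rfl fun i hi => by rw [hω, if_pos (Finset.mem_range.mp hi)], hK]
    abel
  have htail : (fun i => ω (n * p + i)) = fun i => m (i % q) := funext fun i => by simp [hω]
  have hlat : ∀ r : ℕ, tauWord A ω r (θ j' - K) - θ (j' + r) ∈ intLattice d := by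
    refine forall_tauWord_sub_cycle_mem hdet hcyc fun N => ⟨n * p + q * (p * N), ?_, ?_⟩
    · exact le_add_left ((Nat.le_mul_of_pos_left N hp).trans (Nat.le_mul_of_pos_left _ hq))
    · rw [tauWord_add, hstart, htail, tauWord_mod_mul_eq_self A hη]
      simpa using neg_mem hj'
  obtain ⟨k, hk⟩ : ∃ k : Fin d → ℤ, (fun i => (k i : ℝ)) = K := by
    choose k hk using (by simpa [tauWord] using neg_mem (hlat 0) : K ∈ intLattice d)
    exact ⟨k, funext fun i => (hk i).symm⟩
  have hdec : IsCycleDecoding A θ ω k j' := fun x r => by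
    have hdiff := tauWord_sub_tauWord A ω r x (θ j' - K)
    rw [show x - (θ j' - K) = x + K - θ j' by abel] at hdiff
    rw [hk, ← hdiff]
    simpa using hlat r
  exact ⟨k, j', hdec, fun k₂ j₂ h₂ => hdec.unique hA hp hsimple h₂, rfl, hk⟩

/-- decoding of an eventually periodic digit string
ω = ω₀…ω_{np−1} m₀…m_{q−1} m₀…m_{q−1} …: there is a unique (k, j) ∈ ℤ^d × ℤ/pℤ
with τ_{ω_{n'−1}}⋯τ_{ω_0}(x) ≡ (Aᵀ)^{−n'}(x + k − θ_j) + θ_{j+n'} mod ℤ^d for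
all x, n'; moreover j = j' and k = ∑_{i<np} (Aᵀ)^i ω_i + θ_{j'} − (Aᵀ)^{np} η₀,
where η₀ is the fixed point of τ_{m_{q−1}}⋯τ_{m_0}, lying in θ_{j'} − ℤ^d. -/
theorem statement18 (d : ℕ) (hd : 0 < d) (A : Matrix (Fin d) (Fin d) ℤ)
    (hA : Expansive A) (D : Set (Fin d → ℤ)) (hD : CompleteDigits A D)
    (p : ℕ) (hp : 0 < p) (θ : ZMod p → Fin d → ℝ) (l : ZMod p → Fin d → ℤ)
    (hl : ∀ j, l j ∈ D)
    (hcyc : ∀ j : ZMod p,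
      (toR A)ᵀ.mulVec (θ (j + 1)) = θ j + fun i => (l j i : ℝ))
    (hsimple : ∀ j j' : ZMod p, j ≠ j' → (θ j - θ j') ∉ intLattice d)
    (n q : ℕ) (hq : 1 ≤ q)
    (ω0 : ℕ → Fin d → ℤ) (hω0 : ∀ i, i < n * p → ω0 i ∈ D)
    (m : ℕ → Fin d → ℤ) (hm : ∀ i, i < q → m i ∈ D)
    (ω : ℕ → Fin d → ℤ)
    (hω : ∀ i, ω i = if i < n * p then ω0 i else m ((i - n * p) % q))
    (η : Fin d → ℝ) (hη : tauWord A m q η = η)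
    (j' : ZMod p) (hj' : (θ j' - η) ∈ intLattice d) :
    ∃ (k : Fin d → ℤ) (j : ZMod p),
      (∀ (x : Fin d → ℝ) (n' : ℕ),
        (tauWord A ω n' x -
          ((((toR A)ᵀ)⁻¹) ^ n').mulVec (x + (fun i => (k i : ℝ)) - θ j) -
          θ (j + (n' : ZMod p))) ∈ intLattice d) ∧
      (∀ (k₂ : Fin d → ℤ) (j₂ : ZMod p),
        (∀ (x : Fin d → ℝ) (n' : ℕ),
          (tauWord A ω n' x -
            ((((toR A)ᵀ)⁻¹) ^ n').mulVec (x + (fun i => (k₂ i : ℝ)) - θ j₂) -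
            θ (j₂ + (n' : ZMod p))) ∈ intLattice d) → k₂ = k ∧ j₂ = j) ∧
      j = j' ∧
      (fun i => (k i : ℝ)) =
        (∑ i ∈ Finset.range (n * p),
          ((toR A)ᵀ ^ i).mulVec fun i' => (ω0 i i' : ℝ)) + θ j' -
          ((toR A)ᵀ ^ (n * p)).mulVec η :=
  statement18_general d A hA p hp θ l hcyc hsimple n q hq ω0 m ω hω η hη j' hj'
end

section
/- Assume (A, D) satisfies the tiling condition, and assume that X(A^T,D) equals the closure of its interior. Let (θ_j)_{j∈ℤ/pℤ} in ℝ^d and (l_j)_{j∈ℤ/pℤ} in D form a cycle of length p for (τ_d)_{d∈D} with θ_0 ∈ X(A^T,D). If there exists k ∈ ℤ^d with k ≠ 0 and θ_0 − k ∈ X(A^T,D), then every point θ_j, j ∈ ℤ/pℤ, lies in the topological boundary of X(A^T,D). -/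
/-!
Each `τ_v` maps `X = X(Aᵀ, D)` into itself and, being an affine homeomorphism, maps the
interior of `X` into itself. Going around the cycle, `θ₀ ∈ X` therefore puts every `θ_j` in `X`,
and an interior `θ_j` would make `θ₀` interior. But `θ₀` is not interior: `θ₀ - k` lies in
`X = closure (interior X)`, so a neighbourhood of `θ₀` inside `X` would meet `interior X + k`
in a nonempty open set, which the tiling condition forces to be Lebesgue-null.
-/

open Matrix MeasureTheory Filter Topology

/-- The tiling condition: X(Aᵀ,D) tiles ℝ^d by ℤ^d up to Lebesgue-null sets. -/
def TilingCondition (d : ℕ) (A : Matrix (Fin d) (Fin d) ℤ) (D : Set (Fin d → ℤ)) : Prop :=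
  volume (Set.univ \ ⋃ k : Fin d → ℤ,
      (fun y => y + fun i => (k i : ℝ)) '' attractor d A D) = 0 ∧
  ∀ k k' : Fin d → ℤ, k ≠ k' →
    volume (((fun y => y + fun i => (k i : ℝ)) '' attractor d A D) ∩
      ((fun y => y + fun i => (k' i : ℝ)) '' attractor d A D)) = 0

lemma Expansive.isUnit_det_transpose_toR {d : ℕ} {A : Matrix (Fin d) (Fin d) ℤ}
    (hA : Expansive A) : IsUnit ((toR A)ᵀ).det := by
  have hC : (A.map (Int.cast : ℤ → ℂ)).det ≠ 0 := by
    rw [Matrix.det_eq_sign_charpoly_coeff, Polynomial.coeff_zero_eq_eval_zero]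
    refine mul_ne_zero (pow_ne_zero _ (by norm_num)) fun h0 => ?_
    exact absurd (hA 0 h0) (by norm_num)
  have hZ : A.det ≠ 0 := by
    rintro h
    exact hC (by rw [← Int.cast_det, h, Int.cast_zero])
  rw [Matrix.det_transpose, toR, ← Int.cast_det]
  exact isUnit_iff_ne_zero.mpr (by exact_mod_cast hZ)

lemma eq_tauD_of_mulVec_eq {d : ℕ} {A : Matrix (Fin d) (Fin d) ℤ} (hA : Expansive A)
    {v : Fin d → ℤ} {x y : Fin d → ℝ} (h : (toR A)ᵀ.mulVec y = x + fun i => (v i : ℝ)) :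
    y = tauD A v x := by
  rw [tauD, ← h, Matrix.mulVec_mulVec, Matrix.nonsing_inv_mul _ hA.isUnit_det_transpose_toR,
    Matrix.one_mulVec]

lemma isOpenMap_tauD {d : ℕ} {A : Matrix (Fin d) (Fin d) ℤ} (hA : Expansive A)
    (v : Fin d → ℤ) : IsOpenMap (tauD A v) := by
  have hsurj : Function.Surjective ((toR A)ᵀ)⁻¹.mulVec :=
    Matrix.mulVec_surjective_iff_isUnit.mpr
      (Matrix.isUnit_nonsing_inv_iff.mpr
        ((Matrix.isUnit_iff_isUnit_det _).mpr hA.isUnit_det_transpose_toR))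
  exact (LinearMap.isOpenMap_of_finiteDimensional ((toR A)ᵀ)⁻¹.mulVecLin hsurj).comp
    (Homeomorph.addRight _).isOpenMap

lemma tauD_mem_attractor {d : ℕ} {A : Matrix (Fin d) (Fin d) ℤ} {D : Set (Fin d → ℤ)}
    {v : Fin d → ℤ} (hv : v ∈ D) {x : Fin d → ℝ} (hx : x ∈ attractor d A D) :
    tauD A v x ∈ attractor d A D := by
  obtain ⟨dig, hdig, hsum⟩ := hx
  set B := ((toR A)ᵀ)⁻¹
  set dig' : ℕ → Fin d → ℤ := fun n => Nat.rec v (fun m _ => dig m) n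
  have hdig' : ∀ n, dig' (n + 1) = dig n := fun _ => rfl
  refine ⟨dig', fun n => ?_, ?_⟩
  · cases n
    exacts [hv, hdig _]
  have htail : HasSum (fun j => (B ^ (j + 1 + 1)) *ᵥ fun i => (dig' (j + 1) i : ℝ)) (B *ᵥ x) := by
    simpa only [hdig', ContinuousLinearMap.coe_coe, LinearMap.coe_toContinuousLinearMap',
      Matrix.mulVecLin_apply, Matrix.mulVec_mulVec, ← pow_succ'] using
      hsum.mapL (LinearMap.toContinuousLinearMap B.mulVecLin)
  have := htail.zero_add (f := fun j => (B ^ (j + 1)) *ᵥ fun i => (dig' j i : ℝ))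
  rw [zero_add, pow_one] at this
  rw [tauD, Matrix.mulVec_add, add_comm]
  exact this

lemma tauD_mem_interior_attractor {d : ℕ} {A : Matrix (Fin d) (Fin d) ℤ} (hA : Expansive A)
    {D : Set (Fin d → ℤ)} {v : Fin d → ℤ} (hv : v ∈ D) {x : Fin d → ℝ}
    (hx : x ∈ interior (attractor d A D)) : tauD A v x ∈ interior (attractor d A D) := by
  have hsub : tauD A v '' attractor d A D ⊆ attractor d A D :=
    Set.image_subset_iff.mpr fun _ => tauD_mem_attractor hv
  exact interior_mono hsub ((isOpenMap_tauD hA v).image_interior_subset _ ⟨x, hx, rfl⟩)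

lemma ZMod.forall_of_imp_succ {p : ℕ} [NeZero p] {P : ZMod p → Prop}
    (h : ∀ j, P j → P (j + 1)) {i : ZMod p} (hi : P i) (j : ZMod p) : P j := by
  have key : ∀ n : ℕ, P (i + n) := fun n => by
    induction n with
    | zero => simpa using hi
    | succ n ih => simpa [add_assoc] using h _ ih
  simpa using key (j - i).val

lemma notMem_interior_of_measure_inter_translate_eq_zero {G : Type*} [TopologicalSpace G]
    [AddGroup G] [IsTopologicalAddGroup G] [MeasurableSpace G] (μ : Measure G)
    [μ.IsOpenPosMeasure] {X : Set G} {c : G} (hnull : μ (X ∩ (· + c) '' X) = 0) {x : G}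
    (hx : x - c ∈ closure (interior X)) : x ∉ interior X := by
  intro hxX
  obtain ⟨z, hzc, hz⟩ := mem_closure_iff.mp hx _
    (isOpen_interior.preimage (continuous_add_const c)) (by simpa using hxX)
  have hU : IsOpen (interior X ∩ (· + c) '' interior X) :=
    isOpen_interior.inter ((Homeomorph.addRight c).isOpenMap _ isOpen_interior)
  refine hU.measure_ne_zero μ ⟨z + c, hzc, z, hz, rfl⟩ (measure_mono_null ?_ hnull)
  exact Set.inter_subset_inter interior_subset (Set.image_mono interior_subset)

theorem statement19_general (d : ℕ) (A : Matrix (Fin d) (Fin d) ℤ)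
    (hA : Expansive A) (D : Set (Fin d → ℤ))
    (htile : TilingCondition d A D)
    (hreg : closure (interior (attractor d A D)) = attractor d A D)
    (p : ℕ) (hp : 0 < p) (θ : ZMod p → Fin d → ℝ) (l : ZMod p → Fin d → ℤ)
    (hl : ∀ j, l j ∈ D)
    (hcyc : ∀ j : ZMod p,
      (toR A)ᵀ.mulVec (θ (j + 1)) = θ j + fun i => (l j i : ℝ))
    (hθ0 : θ 0 ∈ attractor d A D)
    (k : Fin d → ℤ) (hk : k ≠ 0)
    (hθk : (θ 0 - fun i => (k i : ℝ)) ∈ attractor d A D) :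
    ∀ j : ZMod p, θ j ∈ frontier (attractor d A D) := by
  have : NeZero p := ⟨hp.ne'⟩
  have hstep j : θ (j + 1) = tauD A (l j) (θ j) := eq_tauD_of_mulVec_eq hA (hcyc j)
  have hoverlap : volume (attractor d A D ∩ (· + fun i => (k i : ℝ)) '' attractor d A D) = 0 := by
    simpa only [Pi.zero_apply, Int.cast_zero, ← Pi.zero_def, add_zero, Set.image_id']
      using htile.2 0 k (Ne.symm hk)
  have hθ0_notMem : θ 0 ∉ interior (attractor d A D) :=
    notMem_interior_of_measure_inter_translate_eq_zero volume hoverlap (by rwa [hreg])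
  intro j
  rw [(hreg ▸ isClosed_closure : IsClosed (attractor d A D)).frontier_eq]
  refine ⟨ZMod.forall_of_imp_succ (fun i hi => hstep i ▸ tauD_mem_attractor (hl i) hi) hθ0 j,
    fun hj => hθ0_notMem ?_⟩
  exact ZMod.forall_of_imp_succ
    (fun i hi => hstep i ▸ tauD_mem_interior_attractor hA (hl i) hi) hj 0

/-- under the tiling condition, if a cycle point θ₀ ∈ X(Aᵀ,D)
has a nontrivial integer translate θ₀ − k also in X(Aᵀ,D), then the whole
cycle lies on the topological boundary of X(Aᵀ,D). -/
theorem statement19 (d : ℕ) (hd : 0 < d) (A : Matrix (Fin d) (Fin d) ℤ)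
    (hA : Expansive A) (D : Set (Fin d → ℤ)) (hD : CompleteDigits A D)
    (htile : TilingCondition d A D)
    (hreg : closure (interior (attractor d A D)) = attractor d A D)
    (p : ℕ) (hp : 0 < p) (θ : ZMod p → Fin d → ℝ) (l : ZMod p → Fin d → ℤ)
    (hl : ∀ j, l j ∈ D)
    (hcyc : ∀ j : ZMod p,
      (toR A)ᵀ.mulVec (θ (j + 1)) = θ j + fun i => (l j i : ℝ))
    (hθ0 : θ 0 ∈ attractor d A D)
    (k : Fin d → ℤ) (hk : k ≠ 0)
    (hθk : (θ 0 - fun i => (k i : ℝ)) ∈ attractor d A D) :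
    ∀ j : ZMod p, θ j ∈ frontier (attractor d A D) :=
  statement19_general d A hA D htile hreg p hp θ l hl hcyc hθ0 k hk hθk
end
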